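/- For every p ∈ [1, ∞), the Schatten p-norm is strictly monotone on positive semidefinite matrices: if B is positive semidefinite and P is nonzero positive semidefinite, then ‖B‖_p < ‖B + P‖_p. -/

import Mathlib

open scoped BigOperators

/-- Schatten `p`-norm of a Hermitian real matrix, defined via its eigenvalues. -/
noncomputable def schattenNorm {n : ℕ} (p : ℝ) (B : Matrix (Fin n) (Fin n) ℝ)
    (hB : B.IsHermitian) : ℝ :=
  (∑ k, |hB.eigenvalues k| ^ p) ^ (1 / p)

/-!
Let `u_k` be an orthonormal eigenbasis of `B` with eigenvalues `λ_k`, and `v_j`, `μ_j` one of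
`B + P`. Then `λ_k ≤ ⟪u_k, (B + P) u_k⟫`, strictly for some `k` because `P ≠ 0` is positive
semidefinite. On the other hand `⟪u_k, (B + P) u_k⟫ = ∑_j ⟪v_j, u_k⟫² μ_j`, and the weights
`⟪v_j, u_k⟫²` form a doubly stochastic matrix, so Jensen's inequality for the convex map `t ↦ t ^ p`
gives `∑_k ⟪u_k, (B + P) u_k⟫ ^ p ≤ ∑_j μ_j ^ p`.
-/

open scoped InnerProductSpace ComplexOrder

namespace Matrix

variable {𝕜 : Type*} [RCLike 𝕜] {n : Type*} [Fintype n] [DecidableEq n] {A : Matrix n n 𝕜}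

lemma IsHermitian.re_dotProduct_mulVec_eq_sum (hA : A.IsHermitian) (x : EuclideanSpace 𝕜 n) :
    RCLike.re (star ⇑x ⬝ᵥ A *ᵥ ⇑x) =
      ∑ j, ‖⟪hA.eigenvectorBasis j, x⟫_𝕜‖ ^ 2 * hA.eigenvalues j := by
  set v := hA.eigenvectorBasis
  have hT : ∀ y, toEuclideanLin A y = WithLp.toLp 2 (A *ᵥ y) := fun y => rfl
  have hv : ∀ j, toEuclideanLin A (v j) = (hA.eigenvalues j : 𝕜) • v j := by
    intro j
    rw [hT, hA.mulVec_eigenvectorBasis, RCLike.real_smul_eq_coe_smul (K := 𝕜)]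
    rfl
  have hquad : star ⇑x ⬝ᵥ A *ᵥ ⇑x = ⟪x, toEuclideanLin A x⟫_𝕜 := by
    rw [hT, EuclideanSpace.inner_eq_star_dotProduct, dotProduct_comm]
  rw [hquad, ← v.sum_inner_mul_inner, map_sum]
  refine Finset.sum_congr rfl fun j _ => ?_
  rw [← isSymmetric_toEuclideanLin_iff.mpr hA, hv, inner_smul_left, RCLike.conj_ofReal,
    ← inner_conj_symm x, mul_left_comm, RCLike.conj_mul, ← RCLike.ofReal_pow, ← RCLike.ofReal_mul,
    RCLike.ofReal_re, mul_comm]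

lemma IsHermitian.sum_map_re_dotProduct_mulVec_le_sum_map_eigenvalues {ι : Type*} [Fintype ι]
    (hA : A.IsHermitian) (u : OrthonormalBasis ι 𝕜 (EuclideanSpace 𝕜 n)) {f : ℝ → ℝ} {s : Set ℝ}
    (hf : ConvexOn ℝ s f) (hs : ∀ j, hA.eigenvalues j ∈ s) :
    ∑ k, f (RCLike.re (star ⇑(u k) ⬝ᵥ A *ᵥ ⇑(u k))) ≤ ∑ j, f (hA.eigenvalues j) := by
  set v := hA.eigenvectorBasis
  calc ∑ k, f (RCLike.re (star ⇑(u k) ⬝ᵥ A *ᵥ ⇑(u k)))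
      ≤ ∑ k, ∑ j, ‖⟪v j, u k⟫_𝕜‖ ^ 2 * f (hA.eigenvalues j) := by
        refine Finset.sum_le_sum fun k _ => ?_
        rw [hA.re_dotProduct_mulVec_eq_sum]
        simpa only [smul_eq_mul] using hf.map_sum_le (fun j _ => by positivity)
          (by rw [v.sum_sq_norm_inner_right, u.orthonormal.1 k, one_pow]) fun j _ => hs j
    _ = ∑ j, f (hA.eigenvalues j) := by
        rw [Finset.sum_comm]
        refine Finset.sum_congr rfl fun j _ => ?_
        rw [← Finset.sum_mul, u.sum_sq_norm_inner_left, v.orthonormal.1 j, one_pow, one_mul]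

lemma PosSemidef.exists_dotProduct_mulVec_ne_zero {ι : Type*} {P : Matrix n n 𝕜}
    (hP : P.PosSemidef) (hP0 : P ≠ 0) (b : Module.Basis ι 𝕜 (EuclideanSpace 𝕜 n)) :
    ∃ k, star ⇑(b k) ⬝ᵥ P *ᵥ ⇑(b k) ≠ 0 := by
  by_contra! h
  refine hP0 (toEuclideanLin.map_eq_zero_iff.mp (b.ext fun k => ?_))
  ext i
  simp [(hP.dotProduct_mulVec_zero_iff _).mp (h k)]

lemma PosSemidef.sum_rpow_eigenvalues_lt_sum_rpow_dotProduct_mulVec_add {ι : Type*} [Fintype ι]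
    [DecidableEq ι] {B P : Matrix ι ι ℝ} (hB : B.PosSemidef) (hP : P.PosSemidef) (hP0 : P ≠ 0)
    {p : ℝ} (hp : 0 < p) :
    ∑ k, hB.isHermitian.eigenvalues k ^ p <
      ∑ k, (⇑(hB.isHermitian.eigenvectorBasis k) ⬝ᵥ
        (B + P) *ᵥ ⇑(hB.isHermitian.eigenvectorBasis k)) ^ p := by
  set u := hB.isHermitian.eigenvectorBasis
  have hBP : ∀ k, ⇑(u k) ⬝ᵥ (B + P) *ᵥ ⇑(u k) =
      hB.isHermitian.eigenvalues k + ⇑(u k) ⬝ᵥ P *ᵥ ⇑(u k) := fun k => by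
    have := hB.isHermitian.eigenvalues_eq k
    simp only [star_trivial, RCLike.re_to_real] at this
    rw [add_mulVec, dotProduct_add, ← this]
  have hPu : ∀ k, 0 ≤ ⇑(u k) ⬝ᵥ P *ᵥ ⇑(u k) := fun k => by
    simpa using hP.dotProduct_mulVec_nonneg (u k)
  obtain ⟨k₀, hk₀⟩ := hP.exists_dotProduct_mulVec_ne_zero hP0 u.toBasis
  refine Finset.sum_lt_sum (fun k _ => ?_) ⟨k₀, Finset.mem_univ _, ?_⟩
  · exact Real.rpow_le_rpow (hB.eigenvalues_nonneg k) (by linarith [hBP k, hPu k]) hp.le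
  · refine Real.rpow_lt_rpow (hB.eigenvalues_nonneg k₀) ?_ hp
    have hPk₀ := lt_of_le_of_ne (hPu k₀) (by simpa using hk₀.symm)
    linarith [hBP k₀]

end Matrix

lemma schattenNorm_of_posSemidef {n : ℕ} (p : ℝ) {B : Matrix (Fin n) (Fin n) ℝ}
    (hB : B.PosSemidef) :
    schattenNorm p B hB.isHermitian = (∑ k, hB.isHermitian.eigenvalues k ^ p) ^ (1 / p) := by
  simp only [schattenNorm, abs_of_nonneg (hB.eigenvalues_nonneg _)]

/-- For every `p ∈ [1, ∞)`, the Schatten `p`-norm is strictly monotone on PSD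
matrices: adding a nonzero PSD matrix strictly increases the norm. -/
theorem stmt_1 {n : ℕ} (p : ℝ) (hp : 1 ≤ p)
    (B P : Matrix (Fin n) (Fin n) ℝ)
    (hB : B.PosSemidef) (hP : P.PosSemidef) (hPne : P ≠ 0) :
    schattenNorm p B hB.isHermitian < schattenNorm p (B + P) (hB.add hP).isHermitian := by
  have hp0 : 0 < p := by linarith
  have hlt := hB.sum_rpow_eigenvalues_lt_sum_rpow_dotProduct_mulVec_add hP hPne hp0
  have hle := (hB.add hP).isHermitian.sum_map_re_dotProduct_mulVec_le_sum_map_eigenvalues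
    hB.isHermitian.eigenvectorBasis (convexOn_rpow hp) (hB.add hP).eigenvalues_nonneg
  simp only [star_trivial, RCLike.re_to_real] at hle
  rw [schattenNorm_of_posSemidef p hB, schattenNorm_of_posSemidef p (hB.add hP)]
  have hnonneg : 0 ≤ ∑ k, hB.isHermitian.eigenvalues k ^ p :=
    Finset.sum_nonneg fun k _ => Real.rpow_nonneg (hB.eigenvalues_nonneg k) p
  exact Real.rpow_lt_rpow hnonneg (hlt.trans_le hle) (by positivity)
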